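/- arXiv:2212.11365 — 7 statements merged into one kernel-verified Lean document; each statement's English description precedes it below -/
import Mathlib

section
/- Let α : ℝ → ℝ be locally Lipschitz, strictly monotonically increasing with α(0) = 0. Let y : ℝ → ℝ be differentiable on [0, ∞) and suppose deriv y t ≥ -α (y t) for all t ≥ 0. If y 0 ≥ 0 then y t ≥ 0 for all t ≥ 0. -/
/-! If `y` became negative at `t`, take the last time `s < t` with `y s ≥ 0`. On `(s, t)` we have
`y < 0`, hence `α y < α 0 = 0` and `y' ≥ -α y > 0`, so `y` is strictly increasing on `[s, t]` and
`y t > y s ≥ 0`, a contradiction. -/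

open Set

theorem ContinuousOn.exists_last_nonneg {f : ℝ → ℝ} {a b : ℝ} (hab : a ≤ b)
    (hf : ContinuousOn f (Icc a b)) (ha : 0 ≤ f a) :
    ∃ s ∈ Icc a b, 0 ≤ f s ∧ ∀ x ∈ Ioc s b, f x < 0 := by
  set S := Icc a b ∩ f ⁻¹' Ici 0
  have hS_closed : IsClosed S := hf.preimage_isClosed_of_isClosed isClosed_Icc isClosed_Ici
  have hS_bdd : BddAbove S := ⟨b, fun x hx => hx.1.2⟩
  obtain ⟨hs_mem, hs_nonneg⟩ : sSup S ∈ S :=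
    hS_closed.csSup_mem ⟨a, ⟨left_mem_Icc.2 hab, ha⟩⟩ hS_bdd
  refine ⟨sSup S, hs_mem, hs_nonneg, fun x hx => ?_⟩
  by_contra! hx_nonneg
  have hxS : x ∈ S := ⟨⟨hs_mem.1.trans hx.1.le, hx.2⟩, hx_nonneg⟩
  exact (le_csSup hS_bdd hxS).not_gt hx.1

theorem nonneg_of_deriv_pos_of_neg {f : ℝ → ℝ} {a b : ℝ} (hab : a ≤ b)
    (hf : ContinuousOn f (Icc a b)) (ha : 0 ≤ f a)
    (hf' : ∀ x ∈ Ioo a b, f x < 0 → 0 < deriv f x) : 0 ≤ f b := by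
  obtain ⟨s, hs, hfs, hneg⟩ := hf.exists_last_nonneg hab ha
  by_contra! hfb
  have hsb : s < b := (hs.2.lt_or_eq).resolve_right fun h => (h ▸ hfs).not_gt hfb
  have hmono : StrictMonoOn f (Icc s b) := by
    refine strictMonoOn_of_deriv_pos (convex_Icc s b) (hf.mono (Icc_subset_Icc_left hs.1)) ?_
    rw [interior_Icc]
    exact fun x hx => hf' x ⟨hs.1.trans_lt hx.1, hx.2⟩ (hneg x (Ioo_subset_Ioc_self hx))
  have := hmono (left_mem_Icc.2 hsb.le) (right_mem_Icc.2 hsb.le) hsb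
  linarith

theorem scalar_cbf_comparison_general
    (α : ℝ → ℝ) (hα_mono : StrictMono α)
    (hα_zero : α 0 = 0)
    (y : ℝ → ℝ) (hy : DifferentiableOn ℝ y (Set.Ici (0 : ℝ)))
    (hderiv : ∀ t : ℝ, t ≥ 0 → deriv y t ≥ -α (y t))
    (hy0 : y 0 ≥ 0) :
    ∀ t : ℝ, t ≥ 0 → y t ≥ 0 := by
  intro t ht
  refine nonneg_of_deriv_pos_of_neg ht (hy.continuousOn.mono Icc_subset_Ici_self) hy0 ?_
  intro x hx hyx
  have hα_neg : α (y x) < 0 := hα_zero ▸ hα_mono hyx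
  linarith [hderiv x hx.1.le]

/-- Scalar comparison lemma underlying CBF safety: if `deriv y t ≥ -α (y t)`
for all `t ≥ 0` with `α` locally Lipschitz, strictly increasing and `α 0 = 0`,
then `y 0 ≥ 0` implies `y t ≥ 0` for all `t ≥ 0`. -/
theorem scalar_cbf_comparison
    (α : ℝ → ℝ) (hα_lip : LocallyLipschitz α) (hα_mono : StrictMono α)
    (hα_zero : α 0 = 0)
    (y : ℝ → ℝ) (hy : DifferentiableOn ℝ y (Set.Ici (0 : ℝ)))
    (hderiv : ∀ t : ℝ, t ≥ 0 → deriv y t ≥ -α (y t))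
    (hy0 : y 0 ≥ 0) :
    ∀ t : ℝ, t ≥ 0 → y t ≥ 0 :=
  scalar_cbf_comparison_general α hα_mono hα_zero y hy hderiv hy0
end

section
/- Let α : ℝ → ℝ be locally Lipschitz, strictly monotonically increasing with α(0) = 0. Let c ≥ 0 and let m ∈ ℝ satisfy α(m) = -c (so m ≤ 0). Let y : ℝ → ℝ be differentiable on [0, ∞) with deriv y t ≥ -α (y t) - c for all t ≥ 0. If y 0 ≥ m then y t ≥ m for all t ≥ 0. -/
/-!
Compare `y` with the level `m - ε`, which lies strictly below `y 0`. Wherever `y` touches that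
level, `α (m - ε) < α m = -c` makes the bound `deriv y ≥ -α y - c` strictly positive, so `y`
cannot cross it; letting `ε → 0` gives `y ≥ m`.
-/

open Set

theorem le_of_deriv_pos_where_eq {y : ℝ → ℝ} {a k : ℝ} (hy : DifferentiableOn ℝ y (Ici a))
    (ha : k < y a) (hpos : ∀ x > a, y x = k → 0 < deriv y x) {t : ℝ} (ht : a ≤ t) :
    k ≤ y t := by
  have hderiv : ∀ x ∈ Ico a t, HasDerivWithinAt y (derivWithin y (Ici a) x) (Ici x) x :=
    fun x hx => (hy x hx.1).hasDerivWithinAt.mono (Ici_subset_Ici.mpr hx.1)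
  refine image_le_of_deriv_right_lt_deriv_boundary' continuousOn_const
    (fun x _ => hasDerivWithinAt_const x _ k) ha.le (hy.continuousOn.mono Icc_subset_Ici_self)
    hderiv ?_ ⟨ht, le_rfl⟩
  intro x hx hxk
  have hxa : a < x := hx.1.lt_of_ne (by rintro rfl; exact ha.ne hxk)
  rw [derivWithin_of_mem_nhds (Ici_mem_nhds hxa)]
  exact hpos x hxa hxk.symm

theorem scalar_issf_comparison_general
    (α : ℝ → ℝ) (hα_mono : StrictMono α)
    (c : ℝ) (m : ℝ) (hm : α m = -c)
    (y : ℝ → ℝ) (hy : DifferentiableOn ℝ y (Set.Ici (0 : ℝ)))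
    (hderiv : ∀ t : ℝ, t ≥ 0 → deriv y t ≥ -α (y t) - c)
    (hy0 : y 0 ≥ m) :
    ∀ t : ℝ, t ≥ 0 → y t ≥ m := by
  intro t ht
  refine le_of_forall_sub_le fun ε hε => le_of_deriv_pos_where_eq hy (by linarith) ?_ ht
  intro x hx hxε
  have hαε : α (m - ε) < α m := hα_mono (by linarith)
  calc 0 = -α m - c := by rw [hm]; ring
    _ < -α (y x) - c := by rw [hxε]; linarith
    _ ≤ deriv y x := hderiv x hx.le

/-- ISSf scalar comparison: a constant disturbance `c` in the barrier-derivative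
bound `deriv y ≥ -α (y) - c` yields forward invariance of `{y ≥ m}` where
`α m = -c`. -/
theorem scalar_issf_comparison
    (α : ℝ → ℝ) (hα_lip : LocallyLipschitz α) (hα_mono : StrictMono α)
    (hα_zero : α 0 = 0)
    (c : ℝ) (hc : c ≥ 0) (m : ℝ) (hm : α m = -c)
    (y : ℝ → ℝ) (hy : DifferentiableOn ℝ y (Set.Ici (0 : ℝ)))
    (hderiv : ∀ t : ℝ, t ≥ 0 → deriv y t ≥ -α (y t) - c)
    (hy0 : y 0 ≥ m) :
    ∀ t : ℝ, t ≥ 0 → y t ≥ m :=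
  scalar_issf_comparison_general α hα_mono c m hm y hy hderiv hy0
end

section
/- Let E = EuclideanSpace ℝ (Fin n) and let h : E → ℝ be continuously differentiable such that 0 is a regular value of h (i.e., h(x) = 0 implies fderiv ℝ h x ≠ 0) and such that for every δ ≥ 0 the set Λ_δ = {x ∈ E | -δ ≤ h x ≤ δ} is compact. Then the level-set map c ↦ h⁻¹{c} is upper semi-continuous at 0: for every ε > 0 there exists η > 0 such that for every c ∈ ℝ with |c| < η, the level set {x ∈ E | h x = c} is contained in the open ε-thickening Metric.thickening ε {x ∈ E | h x = 0}. -/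
/-!
Removing the open ε-thickening of the zero set from a compact band `{|h| ≤ δ}` leaves a compact
set on which `|h|` is continuous and positive, hence bounded below by some `m > 0`; then
`η = min δ m` works.
-/

theorem exists_pos_setOf_abs_lt_subset_thickening {X : Type*} [PseudoEMetricSpace X]
    {f : X → ℝ} (hf : Continuous f) {δ : ℝ} (hδ : 0 < δ)
    (hband : IsCompact {x | |f x| ≤ δ}) {ε : ℝ} (hε : 0 < ε) :
    ∃ η > 0, {x | |f x| < η} ⊆ Metric.thickening ε {x | f x = 0} := by
  set K := {x | |f x| ≤ δ} \ Metric.thickening ε {x | f x = 0}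
  have hK : IsCompact K := hband.diff Metric.isOpen_thickening
  have hpos : ∀ x ∈ K, 0 < |f x| := fun x hx =>
    abs_pos.2 fun h0 => hx.2 (Metric.self_subset_thickening hε _ h0)
  obtain ⟨m, hm, hmK⟩ := hK.exists_forall_le' hf.abs.continuousOn hpos
  refine ⟨min δ m, lt_min hδ hm, fun x hx => ?_⟩
  by_contra hxT
  have hxδ : |f x| < δ := hx.trans_le (min_le_left _ _)
  have hxm : |f x| < m := hx.trans_le (min_le_right _ _)
  exact hxm.not_ge (hmK x ⟨hxδ.le, hxT⟩)

theorem levelset_upper_semicontinuous_general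
    {n : ℕ}
    (h : EuclideanSpace ℝ (Fin n) → ℝ) (hh : ContDiff ℝ 1 h)
    (hcomp : ∀ δ : ℝ, δ ≥ 0 →
      IsCompact {x : EuclideanSpace ℝ (Fin n) | -δ ≤ h x ∧ h x ≤ δ}) :
    ∀ ε : ℝ, ε > 0 → ∃ η > 0, ∀ c : ℝ, |c| < η →
      {x : EuclideanSpace ℝ (Fin n) | h x = c} ⊆
        Metric.thickening ε {x : EuclideanSpace ℝ (Fin n) | h x = 0} := by
  intro ε hε
  have hband : IsCompact {x | |h x| ≤ 1} := by
    simpa only [abs_le] using hcomp 1 zero_le_one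
  obtain ⟨η, hη, hsub⟩ :=
    exists_pos_setOf_abs_lt_subset_thickening hh.continuous one_pos hband hε
  refine ⟨η, hη, fun c hc x (hx : h x = c) => hsub ?_⟩
  show |h x| < η
  rwa [hx]

/-- Proposition 1: upper semi-continuity at `0` of the level-set map `c ↦ h⁻¹{c}`
for a continuously differentiable `h` with `0` a regular value and compact bands
`{-δ ≤ h ≤ δ}`. -/
theorem levelset_upper_semicontinuous
    {n : ℕ}
    (h : EuclideanSpace ℝ (Fin n) → ℝ) (hh : ContDiff ℝ 1 h)
    (hreg : ∀ x : EuclideanSpace ℝ (Fin n), h x = 0 → fderiv ℝ h x ≠ 0)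
    (hcomp : ∀ δ : ℝ, δ ≥ 0 →
      IsCompact {x : EuclideanSpace ℝ (Fin n) | -δ ≤ h x ∧ h x ≤ δ}) :
    ∀ ε : ℝ, ε > 0 → ∃ η > 0, ∀ c : ℝ, |c| < η →
      {x : EuclideanSpace ℝ (Fin n) | h x = c} ⊆
        Metric.thickening ε {x : EuclideanSpace ℝ (Fin n) | h x = 0} :=
  levelset_upper_semicontinuous_general h hh hcomp
end

section
/- Let E = EuclideanSpace ℝ (Fin n), U = EuclideanSpace ℝ (Fin m), S ⊆ E, and let F : E → ℝ, β : E → ℝ, G : E → U, and φ, r, a, b ≥ 0. Suppose F is Lipschitz on S with constant ℓF, β is Lipschitz on S with constant ℓβ, the map x ↦ φ‖G x‖² is Lipschitz on S with constant ℓφ, and G is Lipschitz on S with constant ℓG. Assume a ≥ r(ℓF + ℓβ + ℓφ) and b ≥ r·ℓG. Let x̄, x ∈ S with ‖x - x̄‖ ≤ r and let v ∈ U satisfy the robustified constraint F(x̄) + ⟪G(x̄), v⟫ - φ‖G(x̄)‖² - a - b‖v‖ ≥ -β(x̄). Then F(x) + ⟪G(x), v⟫ - φ‖G(x)‖² ≥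 -β(x). -/
/-!
For fixed `v`, the constraint slack `F + ⟪G ·, v⟫ - φ‖G‖² + β` is Lipschitz on `S` with constant
`ℓF + ℓG‖v‖ + ℓφ + ℓβ`, so over radius `r` it drops by at most `a + b‖v‖`, which is exactly the
margin the robustified constraint reserves at `xbar`.
-/

open scoped InnerProductSpace NNReal

lemma LipschitzOnWith.inner_right {X E : Type*} [PseudoMetricSpace X] [NormedAddCommGroup E]
    [InnerProductSpace ℝ E] {G : X → E} {K : ℝ≥0} {s : Set X} (hG : LipschitzOnWith K G s)
    (v : E) : LipschitzOnWith (K * ‖v‖₊) (fun x => ⟪G x, v⟫_ℝ) s :=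
  LipschitzOnWith.of_dist_le_mul fun x hx y hy => calc
    dist ⟪G x, v⟫_ℝ ⟪G y, v⟫_ℝ = |⟪G x - G y, v⟫_ℝ| := by rw [Real.dist_eq, inner_sub_left]
    _ ≤ ‖G x - G y‖ * ‖v‖ := abs_real_inner_le_norm _ _
    _ ≤ K * dist x y * ‖v‖ := by
      rw [← dist_eq_norm]
      exact mul_le_mul_of_nonneg_right (hG.dist_le_mul x hx y hy) (norm_nonneg v)
    _ = ↑(K * ‖v‖₊) * dist x y := by push_cast; ring

lemma LipschitzOnWith.le_add_mul_of_dist_le {X : Type*} [PseudoMetricSpace X] {f : X → ℝ}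
    {K : ℝ≥0} {s : Set X} (hf : LipschitzOnWith K f s) {x y : X} (hx : x ∈ s) (hy : y ∈ s)
    {r : ℝ} (hxy : dist x y ≤ r) : f x ≤ f y + K * r :=
  (hf.le_add_mul hx hy).trans (by gcongr)

theorem trop_robustness_transfer_general
    {n m : ℕ}
    (S : Set (EuclideanSpace ℝ (Fin n)))
    (F β : EuclideanSpace ℝ (Fin n) → ℝ)
    (G : EuclideanSpace ℝ (Fin n) → EuclideanSpace ℝ (Fin m))
    (φ r a b : ℝ)
    (ℓF ℓβ ℓφ ℓG : ℝ≥0)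
    (hF : LipschitzOnWith ℓF F S)
    (hβ : LipschitzOnWith ℓβ β S)
    (hφL : LipschitzOnWith ℓφ (fun x => φ * ‖G x‖ ^ 2) S)
    (hG : LipschitzOnWith ℓG G S)
    (ha : a ≥ r * ((ℓF : ℝ) + (ℓβ : ℝ) + (ℓφ : ℝ)))
    (hb : b ≥ r * (ℓG : ℝ))
    (xbar x : EuclideanSpace ℝ (Fin n)) (hxbar : xbar ∈ S) (hx : x ∈ S)
    (hdist : ‖x - xbar‖ ≤ r)
    (v : EuclideanSpace ℝ (Fin m))
    (hcon : F xbar + ⟪G xbar, v⟫_ℝ - φ * ‖G xbar‖ ^ 2 - a - b * ‖v‖ ≥ -β xbar) :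
    F x + ⟪G x, v⟫_ℝ - φ * ‖G x‖ ^ 2 ≥ -β x := by
  have hslack : LipschitzOnWith (ℓF + ℓG * ‖v‖₊ + ℓφ + ℓβ)
      (fun y => F y + ⟪G y, v⟫_ℝ - φ * ‖G y‖ ^ 2 + β y) S :=
    ((hF.add (hG.inner_right v)).sub hφL).add hβ
  have hvar := hslack.le_add_mul_of_dist_le (r := r) hxbar hx (by rwa [dist_comm, dist_eq_norm])
  have hmargin : r * ((ℓG : ℝ) * ‖v‖) ≤ b * ‖v‖ := by
    rw [← mul_assoc]
    exact mul_le_mul_of_nonneg_right hb (norm_nonneg v)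
  push_cast at hvar
  linarith

/-- Robustness-transfer step: if `v` satisfies the robustified (TR-OP) constraint
at a sampled state `xbar` and the margins `a, b` dominate the Lipschitz variation
over radius `r`, then the non-robust constraint (keeping the `φ`-margin) holds at
every `x ∈ S` within distance `r` of `xbar`. -/
theorem trop_robustness_transfer
    {n m : ℕ}
    (S : Set (EuclideanSpace ℝ (Fin n)))
    (F β : EuclideanSpace ℝ (Fin n) → ℝ)
    (G : EuclideanSpace ℝ (Fin n) → EuclideanSpace ℝ (Fin m))
    (φ r a b : ℝ) (hφ : 0 ≤ φ) (hr : 0 ≤ r) (ha0 : 0 ≤ a) (hb0 : 0 ≤ b)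
    (ℓF ℓβ ℓφ ℓG : ℝ≥0)
    (hF : LipschitzOnWith ℓF F S)
    (hβ : LipschitzOnWith ℓβ β S)
    (hφL : LipschitzOnWith ℓφ (fun x => φ * ‖G x‖ ^ 2) S)
    (hG : LipschitzOnWith ℓG G S)
    (ha : a ≥ r * ((ℓF : ℝ) + (ℓβ : ℝ) + (ℓφ : ℝ)))
    (hb : b ≥ r * (ℓG : ℝ))
    (xbar x : EuclideanSpace ℝ (Fin n)) (hxbar : xbar ∈ S) (hx : x ∈ S)
    (hdist : ‖x - xbar‖ ≤ r)
    (v : EuclideanSpace ℝ (Fin m))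
    (hcon : F xbar + ⟪G xbar, v⟫_ℝ - φ * ‖G xbar‖ ^ 2 - a - b * ‖v‖ ≥ -β xbar) :
    F x + ⟪G x, v⟫_ℝ - φ * ‖G x‖ ^ 2 ≥ -β x :=
  trop_robustness_transfer_general S F β G φ r a b ℓF ℓβ ℓφ ℓG hF hβ hφL hG ha hb xbar x hxbar hx
    hdist v hcon
end

section
/- Let E = EuclideanSpace ℝ (Fin n), U = EuclideanSpace ℝ (Fin m), Y = EuclideanSpace ℝ (Fin k). Let h : E → ℝ be continuously differentiable, f : E → E, g : E → (U →L[ℝ] E), and define the Lie derivatives L_f h(x) = (fderiv ℝ h x)(f x) and, for u ∈ U, L_g h(x)(u) = (fderiv ℝ h x)(g x u), with ‖L_g h(x)‖ the operator norm of the functional u ↦ L_g h(x)(u). Let α : ℝ → ℝ, φ > 0, r₁, r₂ > 0, r₃ = r₁ + r₂, M_e, L ≥ 0, and set S = Metric.cthickening r₃ {x | h x = 0}, assumed nonempty. Suppose on S: L_f h is Lipschitz with constant ℓF, α ∘ h is Lipschitz with constant ℓα, x ↦ φ‖L_g h(x)‖² is Lipschitz with constant ℓφ, the map x ↦ L_g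 h(x) (into the dual of U) is Lipschitz with constant ℓG, and k_θ ∘ c is Lipschitz with constant L, where c : E → Y and k_θ : Y → U. Let D ⊆ E and k_T : E → U satisfy: (i) for every p with h(p) = 0 there exists x₁ ∈ D with ‖p - x₁‖ ≤ r₁; (ii) for every x₁ ∈ D, L_f h(x₁) + L_g h(x₁)(k_T(x₁)) - φ‖L_g h(x₁)‖² - a - b‖k_T(x₁)‖ ≥ -α(h(x₁)) where a ≥ r₃(ℓF + ℓα + ℓφ) and b ≥ r₃·ℓG; (iii) for every x₁ ∈ D, ‖k_T(x₁) - k_θ(c(x₁))‖ ≤ M_e. Then for every x₃ ∈ Metric.cthickening r₂ {x | h x = 0}: L_f h(x₃) + L_g h(x₃)(k_θ(c(x₃))) ≥ -α(h(x₃)) - (1/(2φ))(L·r₃ + M_e)². -/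
open scoped NNReal
open Metric

/-!
The expert's margins `a` and `b` are chosen to absorb, over distance `r₃`, the Lipschitz variation
of every state-dependent term of the barrier condition. Every state `x₃` within `r₂` of the
boundary has a sample `x₁ ∈ D` within `r₃ = r₁ + r₂`, so the expert's robust condition at `x₁`
transfers to `x₃` for the expert input `kT x₁`. The learned input differs from it by at most
`L r₃ + Me`, and the resulting cross term `L_g h(x₃)(u₃ - kT x₁)` is paid for by the `φ ‖L_g h‖²`
slack through Young's inequality.
-/

theorem mul_le_mul_sq_add_sq_div {φ : ℝ} (hφ : 0 < φ) (a b : ℝ) :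
    a * b ≤ φ * a ^ 2 + b ^ 2 / (4 * φ) := by
  have key : φ * a ^ 2 + b ^ 2 / (4 * φ) - a * b = (2 * φ * a - b) ^ 2 / (4 * φ) := by
    field_simp
    ring
  have : 0 ≤ (2 * φ * a - b) ^ 2 / (4 * φ) := by positivity
  linarith

namespace LipschitzOnWith

variable {X Y : Type*} [PseudoMetricSpace X] [PseudoMetricSpace Y] {K : ℝ≥0} {s : Set X}
  {x y : X} {r : ℝ}

protected theorem dist_le_mul_of_le {f : X → Y} (hf : LipschitzOnWith K f s) (hx : x ∈ s)
    (hy : y ∈ s) (hr : dist x y ≤ r) : dist (f x) (f y) ≤ K * r :=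
  (hf.dist_le_mul x hx y hy).trans (by gcongr)

protected theorem le_add_mul_of_le {f : X → ℝ} (hf : LipschitzOnWith K f s) (hx : x ∈ s)
    (hy : y ∈ s) (hr : dist x y ≤ r) : f x ≤ f y + K * r :=
  sub_le_iff_le_add'.1 <| (le_abs_self _).trans (hf.dist_le_mul_of_le hx hy hr)

end LipschitzOnWith

theorem ContinuousLinearMap.apply_sub_apply_le {U : Type*} [SeminormedAddCommGroup U]
    [NormedSpace ℝ U] (G G' : U →L[ℝ] ℝ) (u v : U) :
    G' v - G u ≤ ‖G - G'‖ * ‖v‖ + ‖G‖ * ‖u - v‖ := by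
  have hsplit : G' v - G u = -((G - G') v + G (u - v)) := by
    simp only [map_sub, sub_apply]
    ring
  calc G' v - G u ≤ |(G - G') v| + |G (u - v)| := by
        rw [hsplit]
        exact (neg_le_abs _).trans (abs_add_le _ _)
    _ ≤ ‖G - G'‖ * ‖v‖ + ‖G‖ * ‖u - v‖ :=
        add_le_add ((G - G').le_opNorm v) (G.le_opNorm (u - v))

theorem exists_mem_dist_le_add_of_mem_cthickening {X : Type*} [PseudoMetricSpace X]
    [ProperSpace X] {s D : Set X} {x : X} {ε δ : ℝ} (hs : IsClosed s) (hδ : 0 ≤ δ)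
    (hD : ∀ p ∈ s, ∃ y ∈ D, dist p y ≤ ε) (hx : x ∈ cthickening δ s) :
    ∃ y ∈ D, dist x y ≤ ε + δ ∧ x ∈ cthickening (ε + δ) s ∧ y ∈ cthickening (ε + δ) s := by
  rw [hs.cthickening_eq_biUnion_closedBall hδ] at hx
  obtain ⟨p, hp, hxp⟩ := Set.mem_iUnion₂.1 hx
  rw [mem_closedBall] at hxp
  obtain ⟨y, hyD, hpy⟩ := hD p hp
  have hε : 0 ≤ ε := dist_nonneg.trans hpy
  refine ⟨y, hyD, ?_, mem_cthickening_of_dist_le x p _ s hp (by linarith),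
    mem_cthickening_of_dist_le y p _ s hp (by rw [dist_comm]; linarith)⟩
  linarith [dist_triangle x p y]

theorem barrier_condition_of_robust_of_dist_le {X U : Type*} [PseudoMetricSpace X]
    [SeminormedAddCommGroup U] [NormedSpace ℝ U] {S : Set X} {Lf A : X → ℝ}
    {G : X → U →L[ℝ] ℝ} {φ r a b M : ℝ} {ℓF ℓα ℓφ ℓG : ℝ≥0} (hφ : 0 < φ)
    (hF : LipschitzOnWith ℓF Lf S) (hA : LipschitzOnWith ℓα A S)
    (hΦ : LipschitzOnWith ℓφ (fun x => φ * ‖G x‖ ^ 2) S) (hG : LipschitzOnWith ℓG G S)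
    (ha : a ≥ r * (ℓF + ℓα + ℓφ)) (hb : b ≥ r * ℓG)
    {x y : X} (hx : x ∈ S) (hy : y ∈ S) (hxy : dist x y ≤ r) {u v : U}
    (hrobust : Lf y + G y v - φ * ‖G y‖ ^ 2 - a - b * ‖v‖ ≥ -A y) (huv : ‖u - v‖ ≤ M) :
    Lf x + G x u ≥ -A x - M ^ 2 / (4 * φ) := by
  have hyx : dist y x ≤ r := dist_comm x y ▸ hxy
  have hLf := hF.le_add_mul_of_le hy hx hyx
  have hAy := hA.le_add_mul_of_le hy hx hyx
  have hΦx : φ * ‖G x‖ ^ 2 ≤ φ * ‖G y‖ ^ 2 + ℓφ * r := hΦ.le_add_mul_of_le hx hy hxy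
  have hGxy : ‖G x - G y‖ * ‖v‖ ≤ b * ‖v‖ := by
    have := hG.dist_le_mul_of_le hx hy hxy
    rw [dist_eq_norm] at this
    gcongr
    linarith
  have hcross : ‖G x‖ * ‖u - v‖ ≤ φ * ‖G x‖ ^ 2 + M ^ 2 / (4 * φ) :=
    (mul_le_mul_of_nonneg_left huv (norm_nonneg _)).trans (mul_le_mul_sq_add_sq_div hφ _ _)
  have hperturb := (G x).apply_sub_apply_le (G y) u v
  linarith

theorem learned_controller_barrier_derivative_bound_general
    {n m k : ℕ}
    (h : EuclideanSpace ℝ (Fin n) → ℝ) (hh : ContDiff ℝ 1 h)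
    (f : EuclideanSpace ℝ (Fin n) → EuclideanSpace ℝ (Fin n))
    (g : EuclideanSpace ℝ (Fin n) →
      (EuclideanSpace ℝ (Fin m) →L[ℝ] EuclideanSpace ℝ (Fin n)))
    (α : ℝ → ℝ)
    (φ r₁ r₂ r₃ : ℝ) (hφ : 0 < φ) (hr₂ : 0 < r₂)
    (hr₃ : r₃ = r₁ + r₂)
    (Me : ℝ) (L : ℝ≥0)
    (S : Set (EuclideanSpace ℝ (Fin n)))
    (hS : S = Metric.cthickening r₃ {x : EuclideanSpace ℝ (Fin n) | h x = 0})
    (ℓF ℓα ℓφ ℓG : ℝ≥0)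
    (hF : LipschitzOnWith ℓF (fun x => (fderiv ℝ h x) (f x)) S)
    (hαh : LipschitzOnWith ℓα (fun x => α (h x)) S)
    (hφL : LipschitzOnWith ℓφ (fun x => φ * ‖(fderiv ℝ h x).comp (g x)‖ ^ 2) S)
    (hGlip : LipschitzOnWith ℓG (fun x => (fderiv ℝ h x).comp (g x)) S)
    (c : EuclideanSpace ℝ (Fin n) → EuclideanSpace ℝ (Fin k))
    (kθ : EuclideanSpace ℝ (Fin k) → EuclideanSpace ℝ (Fin m))
    (hkθ : LipschitzOnWith L (kθ ∘ c) S)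
    (D : Set (EuclideanSpace ℝ (Fin n)))
    (kT : EuclideanSpace ℝ (Fin n) → EuclideanSpace ℝ (Fin m))
    (a b : ℝ)
    (ha : a ≥ r₃ * ((ℓF : ℝ) + (ℓα : ℝ) + (ℓφ : ℝ)))
    (hb : b ≥ r₃ * (ℓG : ℝ))
    (hdense : ∀ p : EuclideanSpace ℝ (Fin n), h p = 0 →
      ∃ x₁ ∈ D, ‖p - x₁‖ ≤ r₁)
    (hexpert : ∀ x₁ ∈ D,
      (fderiv ℝ h x₁) (f x₁) + (fderiv ℝ h x₁) (g x₁ (kT x₁))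
        - φ * ‖(fderiv ℝ h x₁).comp (g x₁)‖ ^ 2 - a - b * ‖kT x₁‖
        ≥ -α (h x₁))
    (herr : ∀ x₁ ∈ D, ‖kT x₁ - kθ (c x₁)‖ ≤ Me) :
    ∀ x₃ ∈ Metric.cthickening r₂ {x : EuclideanSpace ℝ (Fin n) | h x = 0},
      (fderiv ℝ h x₃) (f x₃) + (fderiv ℝ h x₃) (g x₃ (kθ (c x₃)))
        ≥ -α (h x₃) - (1 / (2 * φ)) * ((L : ℝ) * r₃ + Me) ^ 2 := by
  intro x₃ hx₃
  obtain ⟨x₁, hx₁D, hdist, hx₃S, hx₁S⟩ := exists_mem_dist_le_add_of_mem_cthickening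
    (isClosed_eq hh.continuous continuous_const) hr₂.le
    (fun p hp => by simpa only [dist_eq_norm] using hdense p hp) hx₃
  subst hr₃ hS
  have hu : ‖kθ (c x₃) - kT x₁‖ ≤ L * (r₁ + r₂) + Me :=
    calc ‖kθ (c x₃) - kT x₁‖ ≤ ‖kθ (c x₃) - kθ (c x₁)‖ + ‖kθ (c x₁) - kT x₁‖ :=
          norm_sub_le_norm_sub_add_norm_sub _ _ _
      _ ≤ L * (r₁ + r₂) + Me := by
          gcongr
          · simpa only [dist_eq_norm, Function.comp_apply] using
              hkθ.dist_le_mul_of_le hx₃S hx₁S hdist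
          · exact norm_sub_rev (kT x₁) _ ▸ herr x₁ hx₁D
  have hbound := barrier_condition_of_robust_of_dist_le (G := fun x => (fderiv ℝ h x).comp (g x))
    hφ hF hαh hφL hGlip ha hb hx₃S hx₁S hdist (hexpert x₁ hx₁D) hu
  have hweaken :
      (L * (r₁ + r₂) + Me) ^ 2 / (4 * φ) ≤ 1 / (2 * φ) * (L * (r₁ + r₂) + Me) ^ 2 := by
    rw [div_eq_mul_one_div, mul_comm]
    gcongr
    linarith
  exact hbound.trans' (by linarith)

/-- Pointwise barrier-derivative bound (eq. (pf_final_bound)) of the main theorem: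
an expert satisfying the TR-OP constraint on a boundary-sampling dataset `D`,
together with a Lipschitz learned controller `kθ ∘ c` that is `Me`-close to the
expert on `D`, yields an ISSf-type derivative bound for `h` at every state
within distance `r₂` of the boundary `{h = 0}`.
Here `L_f h x = (fderiv ℝ h x) (f x)` and `L_g h x = (fderiv ℝ h x).comp (g x)`. -/
theorem learned_controller_barrier_derivative_bound
    {n m k : ℕ}
    (h : EuclideanSpace ℝ (Fin n) → ℝ) (hh : ContDiff ℝ 1 h)
    (f : EuclideanSpace ℝ (Fin n) → EuclideanSpace ℝ (Fin n))
    (g : EuclideanSpace ℝ (Fin n) →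
      (EuclideanSpace ℝ (Fin m) →L[ℝ] EuclideanSpace ℝ (Fin n)))
    (α : ℝ → ℝ)
    (φ r₁ r₂ r₃ : ℝ) (hφ : 0 < φ) (hr₁ : 0 < r₁) (hr₂ : 0 < r₂)
    (hr₃ : r₃ = r₁ + r₂)
    (Me : ℝ) (hMe : 0 ≤ Me) (L : ℝ≥0)
    (S : Set (EuclideanSpace ℝ (Fin n)))
    (hS : S = Metric.cthickening r₃ {x : EuclideanSpace ℝ (Fin n) | h x = 0})
    (hSne : S.Nonempty)
    (ℓF ℓα ℓφ ℓG : ℝ≥0)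
    (hF : LipschitzOnWith ℓF (fun x => (fderiv ℝ h x) (f x)) S)
    (hαh : LipschitzOnWith ℓα (fun x => α (h x)) S)
    (hφL : LipschitzOnWith ℓφ (fun x => φ * ‖(fderiv ℝ h x).comp (g x)‖ ^ 2) S)
    (hGlip : LipschitzOnWith ℓG (fun x => (fderiv ℝ h x).comp (g x)) S)
    (c : EuclideanSpace ℝ (Fin n) → EuclideanSpace ℝ (Fin k))
    (kθ : EuclideanSpace ℝ (Fin k) → EuclideanSpace ℝ (Fin m))
    (hkθ : LipschitzOnWith L (kθ ∘ c) S)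
    (D : Set (EuclideanSpace ℝ (Fin n)))
    (kT : EuclideanSpace ℝ (Fin n) → EuclideanSpace ℝ (Fin m))
    (a b : ℝ)
    (ha : a ≥ r₃ * ((ℓF : ℝ) + (ℓα : ℝ) + (ℓφ : ℝ)))
    (hb : b ≥ r₃ * (ℓG : ℝ))
    (hdense : ∀ p : EuclideanSpace ℝ (Fin n), h p = 0 →
      ∃ x₁ ∈ D, ‖p - x₁‖ ≤ r₁)
    (hexpert : ∀ x₁ ∈ D,
      (fderiv ℝ h x₁) (f x₁) + (fderiv ℝ h x₁) (g x₁ (kT x₁))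
        - φ * ‖(fderiv ℝ h x₁).comp (g x₁)‖ ^ 2 - a - b * ‖kT x₁‖
        ≥ -α (h x₁))
    (herr : ∀ x₁ ∈ D, ‖kT x₁ - kθ (c x₁)‖ ≤ Me) :
    ∀ x₃ ∈ Metric.cthickening r₂ {x : EuclideanSpace ℝ (Fin n) | h x = 0},
      (fderiv ℝ h x₃) (f x₃) + (fderiv ℝ h x₃) (g x₃ (kθ (c x₃)))
        ≥ -α (h x₃) - (1 / (2 * φ)) * ((L : ℝ) * r₃ + Me) ^ 2 :=
  learned_controller_barrier_derivative_bound_general h hh f g α φ r₁ r₂ r₃ hφ hr₂ hr₃ Me L S hS ℓF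
    ℓα ℓφ ℓG hF hαh hφL hGlip c kθ hkθ D kT a b ha hb hdense hexpert herr
end

section
/- Let α : ℝ → ℝ be locally Lipschitz, strictly monotonically increasing with α(0) = 0. Let m ≤ 0 and set c = -α(m) (so c ≥ 0). Let y : ℝ → ℝ be differentiable on [0, ∞) and suppose that for every t ≥ 0 with y t ≤ 0 one has deriv y t ≥ -α (y t) - c. If y 0 ≥ m, then y t ≥ m for all t ≥ 0. -/
/-!
If `y` dropped below `m` at some time, let `s` be the last earlier time with `y s ≥ m`.
After `s` we have `y < m ≤ 0`, so the band bound applies and, `α` being increasing,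
`deriv y ≥ α m - α y > 0` there; thus `y` is monotone after `s` and cannot end up below `m`.
-/

open Set

section LastExit

variable {y : ℝ → ℝ} {a b m : ℝ}

theorem exists_last_ge_of_lt (hab : a ≤ b) (hy : ContinuousOn y (Icc a b)) (ha : m ≤ y a)
    (hb : y b < m) : ∃ s ∈ Ico a b, m ≤ y s ∧ ∀ x ∈ Ioc s b, y x < m := by
  set S := Icc a b ∩ y ⁻¹' Ici m
  have hS : IsCompact S :=
    isCompact_Icc.of_isClosed_subset
      (hy.preimage_isClosed_of_isClosed isClosed_Icc isClosed_Ici) inter_subset_left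
  obtain ⟨s, ⟨⟨has, hsb⟩, hms⟩, hs_max⟩ :=
    hS.exists_isGreatest ⟨a, ⟨le_rfl, hab⟩, ha⟩
  refine ⟨s, ⟨has, hsb.lt_of_ne ?_⟩, hms, fun x hx => ?_⟩
  · rintro rfl
    exact hb.not_ge hms
  · by_contra! hmx
    exact hx.1.not_ge (hs_max ⟨⟨has.trans hx.1.le, hx.2⟩, hmx⟩)

theorem le_of_deriv_nonneg_below (hab : a ≤ b) (hy : ContinuousOn y (Icc a b))
    (hy' : DifferentiableOn ℝ y (Ioo a b)) (ha : m ≤ y a)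
    (hderiv : ∀ x ∈ Ioo a b, y x < m → 0 ≤ deriv y x) : m ≤ y b := by
  by_contra! hb
  obtain ⟨s, ⟨has, hsb⟩, hms, hbelow⟩ := exists_last_ge_of_lt hab hy ha hb
  have hsub : Icc s b ⊆ Icc a b := Icc_subset_Icc_left has
  have hmono : MonotoneOn y (Icc s b) := by
    refine monotoneOn_of_deriv_nonneg (convex_Icc s b) (hy.mono hsub) ?_ ?_ <;>
      rw [interior_Icc]
    · exact hy'.mono (Ioo_subset_Ioo_left has)
    · exact fun x hx => hderiv x (Ioo_subset_Ioo_left has hx) (hbelow x (Ioo_subset_Ioc_self hx))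
  exact hb.not_ge (hms.trans (hmono (left_mem_Icc.2 hsb.le) (right_mem_Icc.2 hsb.le) hsb.le))

end LastExit

theorem scalar_issf_band_comparison_general
    (α : ℝ → ℝ) (hα_mono : StrictMono α)
    (m : ℝ) (hm : m ≤ 0) (c : ℝ) (hc : c = -α m)
    (y : ℝ → ℝ) (hy : DifferentiableOn ℝ y (Set.Ici (0 : ℝ)))
    (hderiv : ∀ t : ℝ, t ≥ 0 → y t ≤ 0 → deriv y t ≥ -α (y t) - c)
    (hy0 : y 0 ≥ m) :
    ∀ t : ℝ, t ≥ 0 → y t ≥ m := by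
  intro t ht
  refine le_of_deriv_nonneg_below ht (hy.continuousOn.mono Icc_subset_Ici_self)
    (hy.mono fun _ hx => hx.1.le) hy0 fun x hx hxm => ?_
  have hband := hderiv x hx.1.le (hxm.le.trans hm)
  have hα_lt : α (y x) < α m := hα_mono hxm
  linarith

/-- Band-restricted ISSf comparison lemma (Nagumo-type argument): if the bound
`deriv y t ≥ -α (y t) - c` is only guaranteed where `y t ≤ 0`, with
`c = -α m` for a level `m ≤ 0`, then `{y ≥ m}` is still forward invariant. -/
theorem scalar_issf_band_comparison
    (α : ℝ → ℝ) (hα_lip : LocallyLipschitz α) (hα_mono : StrictMono α)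
    (hα_zero : α 0 = 0)
    (m : ℝ) (hm : m ≤ 0) (c : ℝ) (hc : c = -α m)
    (y : ℝ → ℝ) (hy : DifferentiableOn ℝ y (Set.Ici (0 : ℝ)))
    (hderiv : ∀ t : ℝ, t ≥ 0 → y t ≤ 0 → deriv y t ≥ -α (y t) - c)
    (hy0 : y 0 ≥ m) :
    ∀ t : ℝ, t ≥ 0 → y t ≥ m :=
  scalar_issf_band_comparison_general α hα_mono m hm c hc y hy hderiv hy0
end

section
/- Let E = EuclideanSpace ℝ (Fin n), U = EuclideanSpace ℝ (Fin m), Y = EuclideanSpace ℝ (Fin k). Let h : E → ℝ be continuously differentiable such that 0 is a regular value of h and {x | -δ ≤ h x ≤ δ} is compact for every δ ≥ 0, with {x | h x = 0} nonempty. Let α : ℝ → ℝ be locally Lipschitz, strictly monotonically increasing, surjective, with α(0) = 0. Let f : E → E, g : E → (U →L[ℝ] E), c : E → Y be locally Lipschitz, and define L_f h(x) = (fderiv ℝ h x)(f x) and L_g h(x)(u) = (fderiv ℝ h x)(g x u). Let r₁, r₂ > 0, r₃ = r₁ + r₂, M_e, L ≥ 0, S = Metric.cthickening r₃ {x | h x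 = 0}, and suppose on S: L_f h is Lipschitz with constant ℓF, α ∘ h is Lipschitz with constant ℓα, x ↦ ‖L_g h(x)‖² is Lipschitz with constant ℓ₂, and x ↦ L_g h(x) is Lipschitz with constant ℓG. Then there exists φ̲ ≥ 0 such that for every φ ≥ φ̲, every a ≥ r₃(ℓF + ℓα + φ·ℓ₂), every b ≥ r₃·ℓG, every dataset D ⊆ E, expert k_T : E → U, and learned controller k_θ : Y → U satisfying: (i) for every p with h(p) ≥ 0 there exists x₁ ∈ D with ‖p - x₁‖ ≤ r₁; (ii) for every x₁ ∈ D, L_f h(x₁) + L_g h(x₁)(k_T(x₁)) - φ‖L_g h(x₁)‖² - a - b‖k_T(x₁)‖ ≥ -α(h(x₁)); (iii) for every x₁ ∈ D, ‖k_T(x₁) - k_θ(c(x₁))‖ ≤ M_e; (iv) k_θ ∘ c is Lipschitz on S with constant L; the following holds: for every m ∈ ℝ with α(m) = -(1/(2φ))(L·r₃ + M_e)² and every x : ℝ → E satisfying HasDerivAt x (f (x t) + g (x t) (k_θ (c (x t)))) t for all t ≥ 0 with h (x 0) ≥ 0, one has h (x t) ≥ m for all t ≥ 0. -/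
/-!
Near the boundary `{h = 0}` every point `p` of the thin layer `{-δ ≤ h ≤ 0}` (thin by
compactness) lies within `r₃` of a sample `x₁`. The Lipschitz bounds transport the sampled CBF
inequality from `x₁` to `p`, the margins `a`, `b` absorb the transport error, and the remaining
mismatch `‖L_g h(p)‖ (L r₃ + Me)` between expert and learned control is absorbed by
`φ ‖L_g h(p)‖²` at the cost `(L r₃ + Me)² / (2φ)`. Hence `d/dt h(x t) ≥ α m - α (h (x t)) > 0`
whenever `m > h (x t) > -δ`, so `h ∘ x` cannot cross the level `m` downwards; `φ̲` is chosen
large enough that `m > -δ`.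
-/

open scoped NNReal
open Metric Set

theorem exists_pos_infDist_lt_of_isCompact {X : Type*} [PseudoMetricSpace X] {h : X → ℝ}
    (hh : Continuous h) (hK : IsCompact {x | -1 ≤ h x ∧ h x ≤ 0}) {r : ℝ} (hr : 0 < r) :
    ∃ δ > 0, ∀ p, -δ ≤ h p → h p ≤ 0 → infDist p {x | h x = 0} < r := by
  set F := {p | -1 ≤ h p ∧ h p ≤ 0 ∧ r ≤ infDist p {x | h x = 0}}
  have hF : IsCompact F := hK.of_isClosed_subset
    ((isClosed_le continuous_const hh).inter ((isClosed_le hh continuous_const).inter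
      (isClosed_le continuous_const (continuous_infDist_pt _)))) fun p hp => ⟨hp.1, hp.2.1⟩
  rcases F.eq_empty_or_nonempty with hFe | hFne
  · refine ⟨1, one_pos, fun p h₁ h₂ => not_le.1 fun hr => ?_⟩
    exact hFe.subset ⟨h₁, h₂, hr⟩
  -- the maximum of `h` on `F` is negative because `infDist` vanishes on `{h = 0}`
  obtain ⟨p₀, hp₀, hmax⟩ := hF.exists_isMaxOn hFne hh.continuousOn
  have hp₀neg : h p₀ < 0 := hp₀.2.1.lt_of_ne fun h0 => by
    have := hp₀.2.2
    rw [infDist_zero_of_mem (s := {x | h x = 0}) h0] at this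
    linarith
  refine ⟨min 1 (-h p₀ / 2), lt_min one_pos (by linarith), fun p h₁ h₂ => not_le.1 fun hr => ?_⟩
  have hpF : p ∈ F := ⟨(neg_le_neg (min_le_left _ _)).trans h₁, h₂, hr⟩
  have : h p ≤ h p₀ := hmax hpF
  linarith [min_le_right 1 (-h p₀ / 2)]

theorem exists_mem_dist_le_of_infDist_lt {X : Type*} [PseudoMetricSpace X] {B D : Set X}
    {r₁ r₂ : ℝ} (hB : B.Nonempty) (hD : ∀ q ∈ B, ∃ x ∈ D, dist q x ≤ r₁) {p : X}
    (hp : infDist p B < r₂) :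
    ∃ x ∈ D, dist p x ≤ r₁ + r₂ ∧ p ∈ cthickening (r₁ + r₂) B ∧ x ∈ cthickening (r₁ + r₂) B := by
  obtain ⟨q, hqB, hpq⟩ := (infDist_lt_iff hB).1 hp
  obtain ⟨x, hxD, hqx⟩ := hD q hqB
  have hpx : dist p x ≤ r₁ + r₂ := by linarith [dist_triangle p q x]
  refine ⟨x, hxD, hpx, mem_cthickening_of_dist_le p q _ B hqB ?_,
    mem_cthickening_of_dist_le x q _ B hqB ?_⟩
  · linarith [dist_nonneg (x := q) (y := x)]
  · rw [dist_comm]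
    linarith [dist_nonneg (x := p) (y := q)]

theorem ContinuousLinearMap.apply_le_apply_add {U : Type*} [SeminormedAddCommGroup U]
    [NormedSpace ℝ U] (A B : U →L[ℝ] ℝ) (v w : U) :
    A v ≤ B w + ‖A - B‖ * ‖v‖ + ‖B‖ * ‖v - w‖ := by
  have h₁ : (A - B) v ≤ ‖A - B‖ * ‖v‖ := (Real.le_norm_self _).trans ((A - B).le_opNorm v)
  have h₂ : B (v - w) ≤ ‖B‖ * ‖v - w‖ := (Real.le_norm_self _).trans (B.le_opNorm _)
  simp only [sub_apply, map_sub] at h₁ h₂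
  linarith

theorem neg_one_div_two_mul_sq_le {φ : ℝ} (hφ : 0 < φ) (s A : ℝ) :
    -(1 / (2 * φ)) * A ^ 2 ≤ φ * s ^ 2 - s * A := by
  have : φ * s ^ 2 - s * A - -(1 / (2 * φ)) * A ^ 2
      = (2 * φ * s - A) ^ 2 / (4 * φ) + A ^ 2 / (4 * φ) := by
    field_simp
    ring
  have : 0 ≤ (2 * φ * s - A) ^ 2 / (4 * φ) + A ^ 2 / (4 * φ) := by positivity
  linarith

theorem le_of_hasDerivAt_pos_below {y y' : ℝ → ℝ} {lo m : ℝ} (hlo : lo < m)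
    (hy : ∀ t ≥ 0, HasDerivAt y (y' t) t) (hpos : ∀ t ≥ 0, lo < y t → y t < m → 0 < y' t)
    (h0 : m ≤ y 0) {t : ℝ} (ht : 0 ≤ t) : m ≤ y t := by
  -- every level strictly between `lo` and `m` is a fence that `y` cannot cross downwards
  have fence : ∀ m' ∈ Ioo lo m, m' ≤ y t := fun m' hm' => by
    have := image_le_of_deriv_right_lt_deriv_boundary (f := fun s => -y s) (f' := fun s => -y' s)
      (a := 0) (b := t) (B := fun _ => -m') (B' := 0)
      (fun s hs => (hy s hs.1).continuousAt.neg.continuousWithinAt)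
      (fun s hs => (hy s hs.1).neg.hasDerivWithinAt) (show -y 0 ≤ -m' by linarith [hm'.2])
      (fun _ => hasDerivAt_const _ _)
      (fun s hs hys => by
        simp only [neg_inj] at hys
        simpa using hpos s hs.1 (hys ▸ hm'.1) (hys ▸ hm'.2))
      ⟨ht, le_rfl⟩
    simpa using this
  by_contra! hlt
  have := fence ((max lo (y t) + m) / 2) ⟨by linarith [le_max_left lo (y t), max_lt hlo hlt],
    by linarith [max_lt hlo hlt]⟩
  linarith [le_max_right lo (y t)]

theorem barrier_le_of_dist_le {X U : Type*} [PseudoMetricSpace X] [SeminormedAddCommGroup U]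
    [NormedSpace ℝ U] {S : Set X} {F αh : X → ℝ} {G : X → U →L[ℝ] ℝ} {u : X → U}
    {ℓF ℓα ℓ₂ ℓG L : ℝ≥0} (hF : LipschitzOnWith ℓF F S) (hαh : LipschitzOnWith ℓα αh S)
    (hsq : LipschitzOnWith ℓ₂ (fun x => ‖G x‖ ^ 2) S) (hG : LipschitzOnWith ℓG G S)
    (hu : LipschitzOnWith L u S) {p x₁ : X} (hp : p ∈ S) (hx₁ : x₁ ∈ S) {r φ a b Me : ℝ}
    (hd : dist p x₁ ≤ r) (hφ : 0 < φ) (ha : r * (ℓF + ℓα + φ * ℓ₂) ≤ a) (hb : r * ℓG ≤ b)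
    {T : U} (hcbf : F x₁ + G x₁ T - φ * ‖G x₁‖ ^ 2 - a - b * ‖T‖ ≥ -αh x₁)
    (herr : ‖T - u x₁‖ ≤ Me) :
    -(1 / (2 * φ)) * (L * r + Me) ^ 2 - αh p ≤ F p + G p (u p) := by
  have eF : F x₁ - F p ≤ ℓF * dist p x₁ :=
    (abs_sub_le_iff.1 (Real.dist_eq _ _ ▸ hF.dist_le_mul p hp x₁ hx₁)).2
  have eα : αh x₁ - αh p ≤ ℓα * dist p x₁ :=
    (abs_sub_le_iff.1 (Real.dist_eq _ _ ▸ hαh.dist_le_mul p hp x₁ hx₁)).2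
  have esq : ‖G p‖ ^ 2 - ‖G x₁‖ ^ 2 ≤ ℓ₂ * dist p x₁ :=
    (abs_sub_le_iff.1 (Real.dist_eq _ _ ▸ hsq.dist_le_mul p hp x₁ hx₁)).1
  have eG : ‖G x₁ - G p‖ * ‖T‖ ≤ b * ‖T‖ := by
    rw [← dist_eq_norm, dist_comm]
    gcongr
    exact (hG.dist_le_mul p hp x₁ hx₁).trans (by nlinarith [ℓG.coe_nonneg])
  have eu : ‖G p‖ * ‖T - u p‖ ≤ ‖G p‖ * (L * r + Me) := by
    gcongr
    calc ‖T - u p‖ ≤ ‖T - u x₁‖ + ‖u x₁ - u p‖ := norm_sub_le_norm_sub_add_norm_sub _ _ _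
      _ ≤ Me + L * r := by
        gcongr
        rw [← dist_eq_norm, dist_comm]
        exact (hu.dist_le_mul p hp x₁ hx₁).trans (by gcongr)
      _ = L * r + Me := add_comm _ _
  have eGu := (G x₁).apply_le_apply_add (G p) T (u p)
  have young := neg_one_div_two_mul_sq_le hφ ‖G p‖ (L * r + Me)
  have esqφ : φ * (‖G p‖ ^ 2 - ‖G x₁‖ ^ 2) ≤ φ * (ℓ₂ * dist p x₁) := by gcongr
  have hsum : ℓF * dist p x₁ + ℓα * dist p x₁ + φ * (ℓ₂ * dist p x₁) ≤ a :=
    calc _ = dist p x₁ * (ℓF + ℓα + φ * ℓ₂) := by ring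
      _ ≤ r * (ℓF + ℓα + φ * ℓ₂) := by gcongr
      _ ≤ a := ha
  linarith

theorem level_mem_Ioc {α : ℝ → ℝ} (hα : StrictMono α) (hα0 : α 0 = 0) {δ φ A m : ℝ}
    (hδ : 0 < δ) (hφ0 : 0 < φ) (hφ : A ^ 2 / -α (-δ) ≤ φ) (hm : α m = -(1 / (2 * φ)) * A ^ 2) :
    m ∈ Ioc (-δ) 0 := by
  have hc : 0 < -α (-δ) := neg_pos.2 (hα0 ▸ hα (neg_lt_zero.2 hδ))
  have hA : A ^ 2 ≤ -α (-δ) * φ := (div_le_iff₀' hc).1 hφ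
  have hmφ : 1 / (2 * φ) * A ^ 2 ≤ -α (-δ) / 2 := by
    rw [div_mul_eq_mul_div, one_mul, div_le_div_iff₀ (by positivity) two_pos]
    nlinarith
  refine ⟨hα.lt_iff_lt.1 ?_, hα.le_iff_le.1 ?_⟩
  · linarith
  · rw [hm, hα0]
    have : 0 ≤ 1 / (2 * φ) * A ^ 2 := by positivity
    linarith

theorem cbf_compliant_imitation_learning_issf_dense_sampling_general
    {n m k : ℕ}
    (h : EuclideanSpace ℝ (Fin n) → ℝ) (hh : ContDiff ℝ 1 h)
    (hcomp : ∀ δ : ℝ, δ ≥ 0 →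
      IsCompact {x : EuclideanSpace ℝ (Fin n) | -δ ≤ h x ∧ h x ≤ δ})
    (hbne : {x : EuclideanSpace ℝ (Fin n) | h x = 0}.Nonempty)
    (α : ℝ → ℝ) (hα_mono : StrictMono α)
    (hα_zero : α 0 = 0)
    (f : EuclideanSpace ℝ (Fin n) → EuclideanSpace ℝ (Fin n))
    (g : EuclideanSpace ℝ (Fin n) →
      (EuclideanSpace ℝ (Fin m) →L[ℝ] EuclideanSpace ℝ (Fin n)))
    (c : EuclideanSpace ℝ (Fin n) → EuclideanSpace ℝ (Fin k))
    (r₁ r₂ r₃ : ℝ) (hr₂ : 0 < r₂) (hr₃ : r₃ = r₁ + r₂)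
    (Me : ℝ) (L : ℝ≥0)
    (S : Set (EuclideanSpace ℝ (Fin n)))
    (hS : S = Metric.cthickening r₃ {x : EuclideanSpace ℝ (Fin n) | h x = 0})
    (ℓF ℓα ℓ₂ ℓG : ℝ≥0)
    (hF : LipschitzOnWith ℓF (fun x => (fderiv ℝ h x) (f x)) S)
    (hαh : LipschitzOnWith ℓα (fun x => α (h x)) S)
    (hsq : LipschitzOnWith ℓ₂ (fun x => ‖(fderiv ℝ h x).comp (g x)‖ ^ 2) S)
    (hGlip : LipschitzOnWith ℓG (fun x => (fderiv ℝ h x).comp (g x)) S) :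
    ∃ φlow : ℝ, 0 ≤ φlow ∧
      ∀ φ : ℝ, φ ≥ φlow →
      ∀ a : ℝ, a ≥ r₃ * ((ℓF : ℝ) + (ℓα : ℝ) + φ * (ℓ₂ : ℝ)) →
      ∀ b : ℝ, b ≥ r₃ * (ℓG : ℝ) →
      ∀ (D : Set (EuclideanSpace ℝ (Fin n)))
        (kT : EuclideanSpace ℝ (Fin n) → EuclideanSpace ℝ (Fin m))
        (kθ : EuclideanSpace ℝ (Fin k) → EuclideanSpace ℝ (Fin m)),
      (∀ p : EuclideanSpace ℝ (Fin n), h p ≥ 0 → ∃ x₁ ∈ D, ‖p - x₁‖ ≤ r₁) →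
      (∀ x₁ ∈ D,
        (fderiv ℝ h x₁) (f x₁) + (fderiv ℝ h x₁) (g x₁ (kT x₁))
          - φ * ‖(fderiv ℝ h x₁).comp (g x₁)‖ ^ 2 - a - b * ‖kT x₁‖
          ≥ -α (h x₁)) →
      (∀ x₁ ∈ D, ‖kT x₁ - kθ (c x₁)‖ ≤ Me) →
      LipschitzOnWith L (kθ ∘ c) S →
      ∀ mlvl : ℝ, α mlvl = -(1 / (2 * φ)) * ((L : ℝ) * r₃ + Me) ^ 2 →
      ∀ x : ℝ → EuclideanSpace ℝ (Fin n),
        (∀ t : ℝ, t ≥ 0 → HasDerivAt x (f (x t) + g (x t) (kθ (c (x t)))) t) →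
        h (x 0) ≥ 0 →
        ∀ t : ℝ, t ≥ 0 → h (x t) ≥ mlvl := by
  subst hr₃ hS
  obtain ⟨δ, hδ, hnear⟩ := exists_pos_infDist_lt_of_isCompact hh.continuous
    ((hcomp 1 zero_le_one).of_isClosed_subset
      ((isClosed_le continuous_const hh.continuous).inter
        (isClosed_le hh.continuous continuous_const))
      fun x hx => ⟨hx.1, hx.2.trans zero_le_one⟩) hr₂
  refine ⟨max 1 ((L * (r₁ + r₂) + Me) ^ 2 / -α (-δ)), zero_le_one.trans (le_max_left _ _), ?_⟩
  intro φ hφ a ha b hb D kT kθ hdense hcbf herr hLlip mlvl hm x hx hx0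
  have hφ0 : 0 < φ := zero_lt_one.trans_le ((le_max_left _ _).trans hφ)
  obtain ⟨hmδ, hm0⟩ := level_mem_Ioc hα_mono hα_zero hδ hφ0 ((le_max_right _ _).trans hφ) hm
  have hD : ∀ q ∈ {x | h x = 0}, ∃ x₁ ∈ D, dist q x₁ ≤ r₁ := fun q hq => by
    obtain ⟨x₁, hx₁, hqx₁⟩ := hdense q (le_of_eq (Eq.symm hq))
    exact ⟨x₁, hx₁, by rwa [dist_eq_norm]⟩
  have hpos : ∀ p, -δ < h p → h p < mlvl → 0 < fderiv ℝ h p (f p + g p (kθ (c p))) := by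
    intro p hp₁ hp₂
    obtain ⟨x₁, hx₁D, hd, hpS, hx₁S⟩ :=
      exists_mem_dist_le_of_infDist_lt hbne hD (hnear p hp₁.le (hp₂.trans_le hm0).le)
    have := barrier_le_of_dist_le hF hαh hsq hGlip hLlip hpS hx₁S hd hφ0 ha hb
      (hcbf x₁ hx₁D) (herr x₁ hx₁D)
    rw [← hm] at this
    simp only [ContinuousLinearMap.comp_apply, Function.comp_apply] at this
    rw [map_add]
    linarith [hα_mono hp₂]
  intro t ht
  exact le_of_hasDerivAt_pos_below (y := h ∘ x) (by linarith)
    (fun s hs => (hh.differentiable one_ne_zero (x s)).hasFDerivAt.comp_hasDerivAt s (hx s hs))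
    (fun s _ => hpos (x s)) (hm0.trans hx0) ht

/-- Corollary 1: the conclusion of the main theorem still holds when the
`r₁`-density sampling condition on the dataset `D` is imposed over the entire
safe set `C = {h ≥ 0}` rather than just its boundary `{h = 0}`: every closed-loop
solution of `ẋ = f(x) + g(x) kθ(c(x))` starting in `C` stays in the expanded set
`C_δ = {x | h x ≥ m}` where `α m = -(1/(2φ))(L r₃ + Me)²`. -/
theorem cbf_compliant_imitation_learning_issf_dense_sampling
    {n m k : ℕ}
    (h : EuclideanSpace ℝ (Fin n) → ℝ) (hh : ContDiff ℝ 1 h)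
    (hreg : ∀ x : EuclideanSpace ℝ (Fin n), h x = 0 → fderiv ℝ h x ≠ 0)
    (hcomp : ∀ δ : ℝ, δ ≥ 0 →
      IsCompact {x : EuclideanSpace ℝ (Fin n) | -δ ≤ h x ∧ h x ≤ δ})
    (hbne : {x : EuclideanSpace ℝ (Fin n) | h x = 0}.Nonempty)
    (α : ℝ → ℝ) (hα_lip : LocallyLipschitz α) (hα_mono : StrictMono α)
    (hα_surj : Function.Surjective α) (hα_zero : α 0 = 0)
    (f : EuclideanSpace ℝ (Fin n) → EuclideanSpace ℝ (Fin n))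
    (g : EuclideanSpace ℝ (Fin n) →
      (EuclideanSpace ℝ (Fin m) →L[ℝ] EuclideanSpace ℝ (Fin n)))
    (c : EuclideanSpace ℝ (Fin n) → EuclideanSpace ℝ (Fin k))
    (hf : LocallyLipschitz f) (hg : LocallyLipschitz g) (hc : LocallyLipschitz c)
    (r₁ r₂ r₃ : ℝ) (hr₁ : 0 < r₁) (hr₂ : 0 < r₂) (hr₃ : r₃ = r₁ + r₂)
    (Me : ℝ) (hMe : 0 ≤ Me) (L : ℝ≥0)
    (S : Set (EuclideanSpace ℝ (Fin n)))
    (hS : S = Metric.cthickening r₃ {x : EuclideanSpace ℝ (Fin n) | h x = 0})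
    (ℓF ℓα ℓ₂ ℓG : ℝ≥0)
    (hF : LipschitzOnWith ℓF (fun x => (fderiv ℝ h x) (f x)) S)
    (hαh : LipschitzOnWith ℓα (fun x => α (h x)) S)
    (hsq : LipschitzOnWith ℓ₂ (fun x => ‖(fderiv ℝ h x).comp (g x)‖ ^ 2) S)
    (hGlip : LipschitzOnWith ℓG (fun x => (fderiv ℝ h x).comp (g x)) S) :
    ∃ φlow : ℝ, 0 ≤ φlow ∧
      ∀ φ : ℝ, φ ≥ φlow →
      ∀ a : ℝ, a ≥ r₃ * ((ℓF : ℝ) + (ℓα : ℝ) + φ * (ℓ₂ : ℝ)) →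
      ∀ b : ℝ, b ≥ r₃ * (ℓG : ℝ) →
      ∀ (D : Set (EuclideanSpace ℝ (Fin n)))
        (kT : EuclideanSpace ℝ (Fin n) → EuclideanSpace ℝ (Fin m))
        (kθ : EuclideanSpace ℝ (Fin k) → EuclideanSpace ℝ (Fin m)),
      (∀ p : EuclideanSpace ℝ (Fin n), h p ≥ 0 → ∃ x₁ ∈ D, ‖p - x₁‖ ≤ r₁) →
      (∀ x₁ ∈ D,
        (fderiv ℝ h x₁) (f x₁) + (fderiv ℝ h x₁) (g x₁ (kT x₁))
          - φ * ‖(fderiv ℝ h x₁).comp (g x₁)‖ ^ 2 - a - b * ‖kT x₁‖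
          ≥ -α (h x₁)) →
      (∀ x₁ ∈ D, ‖kT x₁ - kθ (c x₁)‖ ≤ Me) →
      LipschitzOnWith L (kθ ∘ c) S →
      ∀ mlvl : ℝ, α mlvl = -(1 / (2 * φ)) * ((L : ℝ) * r₃ + Me) ^ 2 →
      ∀ x : ℝ → EuclideanSpace ℝ (Fin n),
        (∀ t : ℝ, t ≥ 0 → HasDerivAt x (f (x t) + g (x t) (kθ (c (x t)))) t) →
        h (x 0) ≥ 0 →
        ∀ t : ℝ, t ≥ 0 → h (x t) ≥ mlvl :=
  cbf_compliant_imitation_learning_issf_dense_sampling_general h hh hcomp hbne α hα_mono hα_zero f g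
    c r₁ r₂ r₃ hr₂ hr₃ Me L S hS ℓF ℓα ℓ₂ ℓG hF hαh hsq hGlip
end
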